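/- (Theorem 1, deterministic core.) Fix σ > 0, matrices X̂₀, X₀ ∈ ℂ^{N_tx×L₀}, a current detected/expected symbol pair x̂₀, x̃₀ ∈ ℂ^{N_tx} with x̂₀ ≠ 0, future symbol pairs x̂_l, x̃_l ∈ ℂ^{N_tx} for l = 1,…,m, APP values θ₁,…,θ_N ∈ [0,1] with N ≤ m, and a fixed rollout suffix a^r ∈ {0,1}^{m−N}. For a ∈ {0,1} and b ∈ {0,1}^m, let X̂(a,b) be X̂₀ augmented with the column x̂₀ if a = 1 and with the columns x̂_l for every l with b_l = 1, and let X(a,b) be X₀ augmented (in the same positions) with x̃₀ if a = 1 and with x̃_l for every l with b_l = 1. Define Q(a,b) = (X̂(a,b)X̂(a,b)ᴴ + σ²I_{N_tx})⁻¹, D(a,b) = X̂(a,b)(X̂(a,b) − X(a,b))ᴴ + σ²I_{N_tx}, the error-covariance expression C(a,b) = σ²Q(a,b) − σ⁴Q(a,b)² + Q(a,b)D(a,b)D(a,b)ᴴQ(a,b), and the weights ω(a^t) = ∏_{l=1}^{N} θ_l^{a^t_l}(1−θ_l)^{1−a^t_l} for a^t ∈ {0,1}^N. For b ∈ {0,1}^m,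 writing Q = Q(0,b), D = D(0,b), α = x̂₀ᴴQx̂₀, t = Qx̂₀/√(1+α), e = (x̂₀−x̃₀)/√(1+α), u = Dᴴt, v = DᴴQt/‖t‖², β = tᴴQt/‖t‖², define Δ(b) = ‖t‖²( σ² + σ⁴(‖t‖² − 2β) + ‖v‖² − ‖e − u + v‖² ). Then Σ_{a^t∈{0,1}^N} ω(a^t) ( Tr C(0,[a^t,a^r]) − Tr C(1,[a^t,a^r]) ) = Σ_{a^t∈{0,1}^N} ω(a^t) Δ([a^t,a^r]); consequently, the MSE-minimizing binary action a* = argmin_{a∈{0,1}} Σ_{a^t} ω(a^t) Tr C(a,[a^t,a^r]) equals 1 if and only if Σ_{a^t∈{0,1}^N} ω(a^t) Δ([a^t,a^r]) ≥ 0. -/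

import Mathlib

open Matrix
open scoped ComplexOrder

noncomputable def nsq {n : ℕ} (v : Fin n → ℂ) : ℝ := ∑ i, Complex.normSq (v i)

/-- Augmentation of the matrix `X0` with the extra column `x0` (present iff
`a = true`, zero otherwise) and the extra columns `xs l` (present iff
`b l = true`, zero otherwise); a column that is set to zero in both the
detected and the true augmented matrices is equivalent to an absent column in
all the products `X̂X̂ᴴ`, `X̂(X̂−X)ᴴ` appearing below. -/
noncomputable def aug {Ntx L₀ : ℕ} {ι : Type*}
    (X0 : Matrix (Fin Ntx) (Fin L₀) ℂ) (x0 : Fin Ntx → ℂ) (xs : ι → Fin Ntx → ℂ)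
    (a : Bool) (b : ι → Bool) :
    Matrix (Fin Ntx) (Fin L₀ ⊕ (Unit ⊕ ι)) ℂ :=
  Matrix.of fun i j =>
    Sum.elim (fun j₀ => X0 i j₀)
      (Sum.elim (fun _ => if a then x0 i else 0)
        (fun l => if b l then xs l i else 0)) j

/-!
Appending the column `x̂₀` is the Hermitian rank-one update `S ↦ S + x̂₀x̂₀ᴴ` of
`S = X̂X̂ᴴ + σ²I`, so by Sherman–Morrison `Q(1,b) = Q - t tᴴ`; likewise `D(1,b) = D + x̂₀(x̂₀ - x̃₀)ᴴ`,
and the two combine to `Q(1,b) D(1,b) = QD + t (e - u)ᴴ`. The traces of the three terms of `C`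
therefore drop by `σ²‖t‖²`, `σ⁴(‖t‖⁴ - 2 tᴴQt)` and `‖t‖²(‖v‖² - ‖e - u + v‖²)`, the last by
completing the square in `(QD)ᴴ t = ‖t‖² v`. Their sum is `Δ(b)`, and the decision rule is the
real part of the `ω`-average.
-/

namespace Matrix

variable {n : Type*} [Fintype n]

theorem trace_sub_vecMulVec_mul_self (Q : Matrix n n ℂ) (t : n → ℂ) :
    trace ((Q - vecMulVec t (star t)) * (Q - vecMulVec t (star t)))
      = trace (Q * Q) - 2 * (star t ⬝ᵥ Q *ᵥ t) + (star t ⬝ᵥ t) ^ 2 := by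
  have hQT : trace (Q * vecMulVec t (star t)) = star t ⬝ᵥ Q *ᵥ t := by
    rw [mul_vecMulVec, trace_vecMulVec, dotProduct_comm]
  simp only [sub_mul, mul_sub, trace_sub, hQT, trace_mul_comm (vecMulVec t (star t)) Q,
    vecMulVec_mul_vecMulVec, vecMulVec_smul, trace_smul, trace_vecMulVec, smul_eq_mul,
    dotProduct_comm t (star t)]
  ring

-- `hv` says `v = Mᴴ t / ‖t‖²`, stated without division so that `t = 0` is allowed.
theorem trace_add_vecMulVec_mul_conjTranspose (M : Matrix n n ℂ) (t w v : n → ℂ)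
    (hv : (star t ⬝ᵥ t) • v = Mᴴ *ᵥ t) :
    trace ((M + vecMulVec t (star w)) * (M + vecMulVec t (star w))ᴴ)
      = trace (M * Mᴴ)
        + (star t ⬝ᵥ t) * (star (w + v) ⬝ᵥ (w + v) - star v ⬝ᵥ v) := by
  have hreal : star (star t ⬝ᵥ t) = star t ⬝ᵥ t := (star_dotProduct t t).symm
  have hcross : (star t ⬝ᵥ t) * (star v ⬝ᵥ w) = star t ⬝ᵥ M *ᵥ w := by
    have := congrArg star hv
    rw [star_smul, hreal, star_mulVec, conjTranspose_conjTranspose] at this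
    rw [← smul_eq_mul, ← smul_dotProduct, this, dotProduct_mulVec]
  have hcross' : (star t ⬝ᵥ t) * (star w ⬝ᵥ v) = star (star t ⬝ᵥ M *ᵥ w) := by
    rw [← hcross, star_mul', hreal, ← star_dotProduct]
  have hMW : trace (M * (vecMulVec t (star w))ᴴ) = star t ⬝ᵥ M *ᵥ w := by
    rw [conjTranspose_vecMulVec, star_star, mul_vecMulVec, trace_vecMulVec, dotProduct_comm]
  have hWM : trace (vecMulVec t (star w) * Mᴴ) = star (star t ⬝ᵥ M *ᵥ w) := by
    rw [← hMW, ← trace_conjTranspose, conjTranspose_mul, conjTranspose_conjTranspose]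
  have hWW : trace (vecMulVec t (star w) * (vecMulVec t (star w))ᴴ)
      = (star t ⬝ᵥ t) * (star w ⬝ᵥ w) := by
    rw [conjTranspose_vecMulVec, star_star, vecMulVec_mul_vecMulVec, vecMulVec_smul,
      trace_smul, trace_vecMulVec, smul_eq_mul, dotProduct_comm t]
    ring
  rw [conjTranspose_add, add_mul, mul_add, mul_add, trace_add, trace_add, trace_add, hMW, hWM,
    hWW, star_add, add_dotProduct, dotProduct_add, dotProduct_add]
  linear_combination -hcross - hcross'

theorem IsHermitian.mul_mul_conjTranspose_mul {P : Matrix n n ℂ} (hP : P.IsHermitian)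
    (E : Matrix n n ℂ) : P * E * Eᴴ * P = P * E * (P * E)ᴴ := by
  rw [conjTranspose_mul, hP.eq, Matrix.mul_assoc (P * E)]

theorem posDef_mul_conjTranspose_add_smul_one [DecidableEq n] {m : Type*} [Fintype m]
    (A : Matrix n m ℂ) {σ : ℝ} (hσ : 0 < σ) : (A * Aᴴ + ((σ : ℂ) ^ 2) • 1).PosDef :=
  PosDef.posSemidef_add (posSemidef_self_mul_conjTranspose A) (PosDef.one.smul (by positivity))

theorem PosSemidef.ofReal_re_dotProduct_mulVec {M : Matrix n n ℂ} (hM : M.PosSemidef)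
    (x : n → ℂ) : (((star x ⬝ᵥ M *ᵥ x).re : ℝ) : ℂ) = star x ⬝ᵥ M *ᵥ x :=
  (Complex.eq_re_of_ofReal_le (r := 0) (by simpa using hM.dotProduct_mulVec_nonneg x)).symm

section RankOneUpdate

variable {Q : Matrix n n ℂ} {x t : n → ℂ} {c : ℝ}

theorem star_vecMul_of_mulVec_eq_smul (hQ : Q.IsHermitian) (ht : Q *ᵥ x = (c : ℂ) • t) :
    star x ᵥ* Q = (c : ℂ) • star t := by
  rw [← hQ.eq, ← star_mulVec, ht, star_smul, Complex.star_def, Complex.conj_ofReal]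

theorem star_dotProduct_of_mulVec_eq_smul (hQ : Q.IsHermitian) (ht : Q *ᵥ x = (c : ℂ) • t) :
    c * (star t ⬝ᵥ x) = star x ⬝ᵥ Q *ᵥ x := by
  rw [dotProduct_mulVec, star_vecMul_of_mulVec_eq_smul hQ ht, smul_dotProduct, smul_eq_mul]

theorem inv_add_vecMulVec_star [DecidableEq n] {S : Matrix n n ℂ} (hSQ : S * Q = 1)
    (hQ : Q.IsHermitian)
    (ht : Q *ᵥ x = (c : ℂ) • t) (hc : (c : ℂ) ^ 2 = 1 + star x ⬝ᵥ Q *ᵥ x) :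
    (S + vecMulVec x (star x))⁻¹ = Q - vecMulVec t (star t) := by
  have hxt : vecMulVec x (star t) = (c : ℂ) • vecMulVec (S *ᵥ t) (star t) := by
    rw [← smul_vecMulVec, ← mulVec_smul, ← ht, mulVec_mulVec, hSQ, one_mulVec]
  have hcoef : (c : ℂ) * c - (star x ⬝ᵥ t) * c = 1 := by
    rw [ht, dotProduct_smul, smul_eq_mul] at hc
    linear_combination hc
  apply inv_eq_right_inv
  rw [add_mul, mul_sub, mul_sub, hSQ, vecMulVec_mul, star_vecMul_of_mulVec_eq_smul hQ ht,
    vecMulVec_mul_vecMulVec, mul_vecMulVec, vecMulVec_smul, vecMulVec_smul, hxt]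
  linear_combination (norm := module) hcoef • vecMulVec (S *ᵥ t) (star t)

theorem sub_vecMulVec_mul_add_vecMulVec (D : Matrix n n ℂ) (e : n → ℂ) (hQ : Q.IsHermitian)
    (ht : Q *ᵥ x = (c : ℂ) • t) (hc : (c : ℂ) ^ 2 = 1 + star x ⬝ᵥ Q *ᵥ x) :
    (Q - vecMulVec t (star t)) * (D + vecMulVec x (star ((c : ℂ) • e)))
      = Q * D + vecMulVec t (star (e - Dᴴ *ᵥ t)) := by
  have hcoef : (c : ℂ) * c - (star t ⬝ᵥ x) * c = 1 := by
    rw [← star_dotProduct_of_mulVec_eq_smul hQ ht] at hc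
    linear_combination hc
  rw [sub_mul, mul_add, mul_add, mul_vecMulVec, ht, vecMulVec_mul, vecMulVec_mul_vecMulVec,
    star_sub, star_mulVec, conjTranspose_conjTranspose, star_smul, Complex.star_def,
    Complex.conj_ofReal, vecMulVec_sub, smul_vecMulVec, vecMulVec_smul, vecMulVec_smul,
    vecMulVec_smul]
  linear_combination (norm := module) hcoef • vecMulVec t (star e)

end RankOneUpdate

end Matrix

section ErrorCovariance

variable {n : Type*} [Fintype n]

noncomputable def errorCov (σ : ℝ) (Q D : Matrix n n ℂ) : Matrix n n ℂ :=
  ((σ : ℂ) ^ 2) • Q - ((σ : ℂ) ^ 4) • (Q * Q) + Q * D * Dᴴ * Q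

theorem trace_errorCov_sub_errorCov (σ : ℝ) {Q D D' : Matrix n n ℂ} (hQ : Q.IsHermitian)
    (t w v : n → ℂ) (hv : (star t ⬝ᵥ t) • v = (Q * D)ᴴ *ᵥ t)
    (hQD' : (Q - vecMulVec t (star t)) * D' = Q * D + vecMulVec t (star w)) :
    trace (errorCov σ Q D) - trace (errorCov σ (Q - vecMulVec t (star t)) D')
      = (σ : ℂ) ^ 2 * (star t ⬝ᵥ t) - (σ : ℂ) ^ 4 * (2 * (star t ⬝ᵥ Q *ᵥ t) - (star t ⬝ᵥ t) ^ 2)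
        + (star t ⬝ᵥ t) * (star v ⬝ᵥ v - star (w + v) ⬝ᵥ (w + v)) := by
  have hQ' : (Q - vecMulVec t (star t)).IsHermitian :=
    hQ.sub (by rw [IsHermitian, conjTranspose_vecMulVec, star_star])
  rw [errorCov, errorCov, hQ.mul_mul_conjTranspose_mul, hQ'.mul_mul_conjTranspose_mul, hQD',
    trace_add, trace_add, trace_add_vecMulVec_mul_conjTranspose (Q * D) t w v hv]
  simp only [trace_sub, trace_smul, smul_eq_mul, trace_sub_vecMulVec_mul_self,
    trace_vecMulVec, dotProduct_comm t]
  ring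

end ErrorCovariance

theorem ofReal_nsq {k : ℕ} (v : Fin k → ℂ) : ((nsq v : ℝ) : ℂ) = star v ⬝ᵥ v := by
  simp [nsq, dotProduct, Complex.normSq_eq_conj_mul_self]

theorem nsq_ne_zero {k : ℕ} {t : Fin k → ℂ} (ht : t ≠ 0) : nsq t ≠ 0 := fun h =>
  ht <| dotProduct_star_self_eq_zero.mp <| by rw [← ofReal_nsq, h, Complex.ofReal_zero]

theorem dotProduct_star_self_smul_inv_nsq_smul {k : ℕ} (t y : Fin k → ℂ) (hy : t = 0 → y = 0) :
    (star t ⬝ᵥ t) • (((nsq t : ℝ) : ℂ)⁻¹ • y) = y := by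
  rcases eq_or_ne t 0 with ht | ht
  · simp [ht, hy ht]
  · rw [← ofReal_nsq]
    exact smul_inv_smul₀ (Complex.ofReal_ne_zero.mpr (nsq_ne_zero ht)) y

theorem ofReal_div_nsq_mul_dotProduct_star_self {k : ℕ} (t : Fin k → ℂ) (r : ℝ)
    (hr : t = 0 → r = 0) : ((r / nsq t : ℝ) : ℂ) * (star t ⬝ᵥ t) = r := by
  rcases eq_or_ne t 0 with ht | ht
  · simp [ht, hr ht]
  · rw [← ofReal_nsq, ← Complex.ofReal_mul, div_mul_cancel₀ r (nsq_ne_zero ht)]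

theorem aug_true_mul_conjTranspose {k L₀ : ℕ} {ι : Type*} [Fintype ι]
    (A B : Matrix (Fin k) (Fin L₀) ℂ) (x y : Fin k → ℂ) (xs ys : ι → Fin k → ℂ) (b : ι → Bool) :
    aug A x xs true b * (aug B y ys true b)ᴴ
      = aug A x xs false b * (aug B y ys false b)ᴴ + vecMulVec x (star y) := by
  ext i j
  simp [aug, mul_apply, Fintype.sum_sum_type, vecMulVec_apply, add_assoc, add_comm]

/-- `Δ(b)` of the paper, evaluated at `Q = Q(0,b)`, `D = D(0,b)`, `x = x̂₀`, `x' = x̃₀`. -/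
noncomputable def mseGain {k : ℕ} (σ : ℝ) (Q D : Matrix (Fin k) (Fin k) ℂ) (x x' : Fin k → ℂ) :
    ℝ :=
  let α : ℝ := (star x ⬝ᵥ Q *ᵥ x).re
  let t : Fin k → ℂ := ((Real.sqrt (1 + α) : ℝ) : ℂ)⁻¹ • (Q *ᵥ x)
  let e : Fin k → ℂ := ((Real.sqrt (1 + α) : ℝ) : ℂ)⁻¹ • (x - x')
  let u : Fin k → ℂ := Dᴴ *ᵥ t
  let v : Fin k → ℂ := ((nsq t : ℝ) : ℂ)⁻¹ • (Dᴴ *ᵥ (Q *ᵥ t))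
  let β : ℝ := (star t ⬝ᵥ Q *ᵥ t).re / nsq t
  nsq t * (σ ^ 2 + σ ^ 4 * (nsq t - 2 * β) + nsq v - nsq (e - u + v))

theorem trace_errorCov_sub_eq_mseGain {k L₀ : ℕ} {ι : Type*} [Fintype ι] (σ : ℝ) (hσ : 0 < σ)
    (Xhat0 X0 : Matrix (Fin k) (Fin L₀) ℂ) (xh0 xt0 : Fin k → ℂ) (xh xt : ι → Fin k → ℂ)
    (b : ι → Bool) (Q D : Bool → Matrix (Fin k) (Fin k) ℂ)
    (hQ : ∀ a, Q a = (aug Xhat0 xh0 xh a b * (aug Xhat0 xh0 xh a b)ᴴ + ((σ : ℂ) ^ 2) • 1)⁻¹)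
    (hD : ∀ a, D a = aug Xhat0 xh0 xh a b * (aug Xhat0 xh0 xh a b - aug X0 xt0 xt a b)ᴴ
      + ((σ : ℂ) ^ 2) • 1) :
    trace (errorCov σ (Q false) (D false)) - trace (errorCov σ (Q true) (D true))
      = mseGain σ (Q false) (D false) xh0 xt0 := by
  set S := aug Xhat0 xh0 xh false b * (aug Xhat0 xh0 xh false b)ᴴ + ((σ : ℂ) ^ 2) • 1
  have hS : S.PosDef := posDef_mul_conjTranspose_add_smul_one _ hσ
  have hSQ : S * Q false = 1 := by
    rw [hQ false]
    exact mul_nonsing_inv S ((isUnit_iff_isUnit_det S).mp hS.isUnit)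
  have hQpsd : (Q false).PosSemidef := by
    rw [hQ false]
    exact hS.inv.posSemidef
  unfold mseGain
  extract_lets α t e u v β
  have hQh : (Q false).IsHermitian := hQpsd.isHermitian
  have hα : (α : ℂ) = star xh0 ⬝ᵥ Q false *ᵥ xh0 := hQpsd.ofReal_re_dotProduct_mulVec xh0
  have hα0 : 0 ≤ α := hQpsd.re_dotProduct_nonneg xh0
  set c := Real.sqrt (1 + α)
  have hc : (c : ℂ) ^ 2 = 1 + star xh0 ⬝ᵥ Q false *ᵥ xh0 := by
    rw [← hα]
    exact_mod_cast Real.sq_sqrt (by linarith)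
  have hc0 : (c : ℂ) ≠ 0 := by exact_mod_cast (Real.sqrt_pos.mpr (by linarith)).ne'
  have hQx : Q false *ᵥ xh0 = (c : ℂ) • t := by
    rw [smul_inv_smul₀ hc0]
  have hce : (c : ℂ) • e = xh0 - xt0 := by
    rw [smul_inv_smul₀ hc0]
  have hQt : Q true = Q false - vecMulVec t (star t) := by
    rw [hQ true, aug_true_mul_conjTranspose, add_right_comm]
    exact inv_add_vecMulVec_star hSQ hQh hQx hc
  have hDt : D true = D false + vecMulVec xh0 (star ((c : ℂ) • e)) := by
    rw [hD true, hD false, hce, conjTranspose_sub, conjTranspose_sub, Matrix.mul_sub,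
      Matrix.mul_sub, aug_true_mul_conjTranspose, aug_true_mul_conjTranspose, star_sub,
      vecMulVec_sub]
    abel
  have hQD : (Q false - vecMulVec t (star t)) * D true
      = Q false * D false + vecMulVec t (star (e - u)) := by
    rw [hDt]
    exact sub_vecMulVec_mul_add_vecMulVec (D false) e hQh hQx hc
  have hv : (star t ⬝ᵥ t) • v = (Q false * D false)ᴴ *ᵥ t := by
    rw [conjTranspose_mul, hQh.eq, ← mulVec_mulVec]
    exact dotProduct_star_self_smul_inv_nsq_smul t _ fun h => by simp [h]
  have hβ : (β : ℂ) * (star t ⬝ᵥ t) = star t ⬝ᵥ Q false *ᵥ t := by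
    rw [← hQpsd.ofReal_re_dotProduct_mulVec t]
    exact ofReal_div_nsq_mul_dotProduct_star_self t _ fun h => by simp [h]
  rw [hQt, trace_errorCov_sub_errorCov σ hQh t (e - u) v hv hQD]
  push_cast
  rw [ofReal_nsq, ofReal_nsq, ofReal_nsq, sub_add]
  linear_combination 2 * (σ : ℂ) ^ 4 * hβ

theorem theorem_one_core_general
    (Ntx L₀ N r : ℕ) (σ : ℝ) (hσ : 0 < σ)
    (Xhat0 X0 : Matrix (Fin Ntx) (Fin L₀) ℂ)
    (xh0 xt0 : Fin Ntx → ℂ)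
    (xh xt : (Fin N ⊕ Fin r) → Fin Ntx → ℂ)
    (ar : Fin r → Bool)
    (Q D C : Bool → ((Fin N ⊕ Fin r) → Bool) → Matrix (Fin Ntx) (Fin Ntx) ℂ)
    (hQ : ∀ a b, Q a b = ((aug Xhat0 xh0 xh a b) * (aug Xhat0 xh0 xh a b)ᴴ
      + ((σ : ℂ) ^ 2) • 1)⁻¹)
    (hD : ∀ a b, D a b = (aug Xhat0 xh0 xh a b)
      * ((aug Xhat0 xh0 xh a b) - (aug X0 xt0 xt a b))ᴴ + ((σ : ℂ) ^ 2) • 1)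
    (hC : ∀ a b, C a b = ((σ : ℂ) ^ 2) • Q a b - ((σ : ℂ) ^ 4) • (Q a b * Q a b)
      + Q a b * D a b * (D a b)ᴴ * Q a b)
    (ω : (Fin N → Bool) → ℝ)
    (Δ : ((Fin N ⊕ Fin r) → Bool) → ℝ)
    (hΔ : ∀ b, Δ b =
      let Q0 := Q false b
      let D0 := D false b
      let α : ℝ := (star xh0 ⬝ᵥ Q0 *ᵥ xh0).re
      let t : Fin Ntx → ℂ := ((Real.sqrt (1 + α) : ℝ) : ℂ)⁻¹ • (Q0 *ᵥ xh0)
      let e : Fin Ntx → ℂ := ((Real.sqrt (1 + α) : ℝ) : ℂ)⁻¹ • (xh0 - xt0)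
      let u : Fin Ntx → ℂ := D0ᴴ *ᵥ t
      let v : Fin Ntx → ℂ := ((nsq t : ℝ) : ℂ)⁻¹ • (D0ᴴ *ᵥ (Q0 *ᵥ t))
      let β : ℝ := (star t ⬝ᵥ Q0 *ᵥ t).re / nsq t
      nsq t * (σ ^ 2 + σ ^ 4 * (nsq t - 2 * β) + nsq v - nsq (e - u + v))) :
    (∑ a_t : Fin N → Bool, ((ω a_t : ℝ) : ℂ) *
          (Matrix.trace (C false (Sum.elim a_t ar))
            - Matrix.trace (C true (Sum.elim a_t ar)))
        = ∑ a_t : Fin N → Bool, ((ω a_t : ℝ) : ℂ) * ((Δ (Sum.elim a_t ar) : ℝ) : ℂ)) ∧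
    ((∑ a_t : Fin N → Bool, ω a_t * (Matrix.trace (C true (Sum.elim a_t ar))).re
        ≤ ∑ a_t : Fin N → Bool, ω a_t * (Matrix.trace (C false (Sum.elim a_t ar))).re)
      ↔ 0 ≤ ∑ a_t : Fin N → Bool, ω a_t * Δ (Sum.elim a_t ar)) := by
  have hgain : ∀ b, trace (C false b) - trace (C true b) = Δ b := fun b => by
    rw [hC, hC, hΔ b]
    exact trace_errorCov_sub_eq_mseGain σ hσ Xhat0 X0 xh0 xt0 xh xt b (Q · b) (D · b)
      (hQ · b) (hD · b)
  have hgain_re : ∀ b, (trace (C false b)).re - (trace (C true b)).re = Δ b := fun b => by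
    simpa using congrArg Complex.re (hgain b)
  refine ⟨Finset.sum_congr rfl fun a_t _ => by rw [hgain], ?_⟩
  rw [← sub_nonneg, ← Finset.sum_sub_distrib]
  simp_rw [← mul_sub, hgain_re]

/-- Theorem 1, deterministic core: the APP-weighted average of
the trace reduction of the error-covariance expression `C` over all tree-policy
action sequences equals the weighted average of the closed-form quantity `Δ`;
consequently, the MSE-minimizing binary action equals `1` iff
`Σ_{aᵗ} ω(aᵗ) Δ([aᵗ,aʳ]) ≥ 0`.  Future time slots are indexed by
`Fin N ⊕ Fin r` (the `N` tree-policy slots and the `m − N = r` rollout slots),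
and `Sum.elim aᵗ aʳ` is the concatenation `[aᵗ, aʳ]`. -/
theorem theorem_one_core
    (Ntx L₀ N r : ℕ) (σ : ℝ) (hσ : 0 < σ)
    (Xhat0 X0 : Matrix (Fin Ntx) (Fin L₀) ℂ)
    (xh0 xt0 : Fin Ntx → ℂ) (hxh0 : xh0 ≠ 0)
    (xh xt : (Fin N ⊕ Fin r) → Fin Ntx → ℂ)
    (θ : Fin N → ℝ) (hθ : ∀ l, θ l ∈ Set.Icc (0 : ℝ) 1)
    (ar : Fin r → Bool)
    (Q D C : Bool → ((Fin N ⊕ Fin r) → Bool) → Matrix (Fin Ntx) (Fin Ntx) ℂ)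
    (hQ : ∀ a b, Q a b = ((aug Xhat0 xh0 xh a b) * (aug Xhat0 xh0 xh a b)ᴴ
      + ((σ : ℂ) ^ 2) • 1)⁻¹)
    (hD : ∀ a b, D a b = (aug Xhat0 xh0 xh a b)
      * ((aug Xhat0 xh0 xh a b) - (aug X0 xt0 xt a b))ᴴ + ((σ : ℂ) ^ 2) • 1)
    (hC : ∀ a b, C a b = ((σ : ℂ) ^ 2) • Q a b - ((σ : ℂ) ^ 4) • (Q a b * Q a b)
      + Q a b * D a b * (D a b)ᴴ * Q a b)
    (ω : (Fin N → Bool) → ℝ)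
    (hω : ∀ a_t, ω a_t = ∏ l, if a_t l then θ l else 1 - θ l)
    (Δ : ((Fin N ⊕ Fin r) → Bool) → ℝ)
    (hΔ : ∀ b, Δ b =
      let Q0 := Q false b
      let D0 := D false b
      let α : ℝ := (star xh0 ⬝ᵥ Q0 *ᵥ xh0).re
      let t : Fin Ntx → ℂ := ((Real.sqrt (1 + α) : ℝ) : ℂ)⁻¹ • (Q0 *ᵥ xh0)
      let e : Fin Ntx → ℂ := ((Real.sqrt (1 + α) : ℝ) : ℂ)⁻¹ • (xh0 - xt0)
      let u : Fin Ntx → ℂ := D0ᴴ *ᵥ t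
      let v : Fin Ntx → ℂ := ((nsq t : ℝ) : ℂ)⁻¹ • (D0ᴴ *ᵥ (Q0 *ᵥ t))
      let β : ℝ := (star t ⬝ᵥ Q0 *ᵥ t).re / nsq t
      nsq t * (σ ^ 2 + σ ^ 4 * (nsq t - 2 * β) + nsq v - nsq (e - u + v))) :
    (∑ a_t : Fin N → Bool, ((ω a_t : ℝ) : ℂ) *
          (Matrix.trace (C false (Sum.elim a_t ar))
            - Matrix.trace (C true (Sum.elim a_t ar)))
        = ∑ a_t : Fin N → Bool, ((ω a_t : ℝ) : ℂ) * ((Δ (Sum.elim a_t ar) : ℝ) : ℂ)) ∧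
    ((∑ a_t : Fin N → Bool, ω a_t * (Matrix.trace (C true (Sum.elim a_t ar))).re
        ≤ ∑ a_t : Fin N → Bool, ω a_t * (Matrix.trace (C false (Sum.elim a_t ar))).re)
      ↔ 0 ≤ ∑ a_t : Fin N → Bool, ω a_t * Δ (Sum.elim a_t ar)) :=
  theorem_one_core_general Ntx L₀ N r σ hσ Xhat0 X0 xh0 xt0 xh xt ar Q D C hQ hD hC ω Δ hΔ
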